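/- arXiv:2407.07442 — 6 statements merged into one kernel-verified Lean document; each statement's English description precedes it below -/
import Mathlib

section
/- Let (Γ₀, <), …, (Γ_{n−1}, <) be well-ordered sets and let L be an initial segment (lower set) of the product ∏_{i<n} Γ_i with the product partial order. Then for each i there exists a finite segmentation 𝒮_i of Γ_i (a finite partition into order-convex sets) such that the partition ⨂_i 𝒮_i of the product refines the two-element partition {L, (∏_{i<n} Γ_i) \ L}. -/
/-!
By Dickson's lemma the product of finitely many well-orders is a well-quasi-order, so the upper
set `Lᶜ` is the upper closure of its finitely many minimal elements `M`. Cutting each `Γ i` at the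
finitely many thresholds `m i` (`m ∈ M`) gives a segmentation in which a segment is determined by
which thresholds lie below it; hence two points in the same product segment lie above the same
elements of `M`, and so are both in `Lᶜ` or both in `L`.
-/

open Finset

theorem IsUpperSet.exists_finset_upperClosure_eq {α : Type*} [PartialOrder α]
    [WellQuasiOrderedLE α] {U : Set α} (hU : IsUpperSet U) :
    ∃ M : Finset α, (upperClosure (M : Set α) : Set α) = U := by
  have hfin : {x | Minimal (· ∈ U) x}.Finite :=
    WellQuasiOrderedLE.finite_of_isAntichain (setOfPred_minimal_antichain _)
  refine ⟨hfin.toFinset, Set.ext fun x => ?_⟩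
  simp only [SetLike.mem_coe, mem_upperClosure, Set.Finite.coe_toFinset, Set.mem_ofPred_eq]
  constructor
  · rintro ⟨m, hm, hmx⟩
    exact hU hmx hm.prop
  · intro hx
    obtain ⟨m, hmx, hm⟩ := (Set.isPWO_of_wellQuasiOrderedLE U).exists_le_minimal hx
    exact ⟨m, hm, hmx⟩

section thresholdCount

variable {α : Type*} [LinearOrder α] (T : Finset α)

def thresholdCount (a : α) : Fin (#T + 1) :=
  ⟨#{t ∈ T | t ≤ a}, Nat.lt_succ_of_le (card_filter_le _ _)⟩

theorem monotone_thresholdCount : Monotone (thresholdCount T) := fun _ _ hab =>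
  Fin.mk_le_mk.mpr <| card_le_card <| monotone_filter_right T fun _ _ hta => hta.trans hab

theorem ordConnected_thresholdCount_preimage (c : Fin (#T + 1)) :
    (thresholdCount T ⁻¹' {c}).OrdConnected :=
  Set.ordConnected_singleton.preimage_mono (monotone_thresholdCount T)

theorem le_iff_le_of_thresholdCount_eq {a b : α} (h : thresholdCount T a = thresholdCount T b)
    {t : α} (ht : t ∈ T) : t ≤ a ↔ t ≤ b := by
  suffices key : ∀ u v, u ≤ v → thresholdCount T u = thresholdCount T v → t ≤ v → t ≤ u by
    rcases le_total a b with hab | hba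
    · exact ⟨fun hta => hta.trans hab, key a b hab h⟩
    · exact ⟨key b a hba h.symm, fun htb => htb.trans hba⟩
  intro u v huv hcount htv
  have hsub : {t ∈ T | t ≤ u} ⊆ {t ∈ T | t ≤ v} :=
    monotone_filter_right T fun _ _ htu => htu.trans huv
  have hcard : #{t ∈ T | t ≤ v} ≤ #{t ∈ T | t ≤ u} := (Fin.mk.inj_iff.mp hcount).ge
  have hmem : t ∈ {t ∈ T | t ≤ v} := mem_filter.mpr ⟨ht, htv⟩
  rw [← eq_of_subset_of_card_le hsub hcard] at hmem
  exact (mem_filter.mp hmem).2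

end thresholdCount

/-- A segmentation of `Γ i` is encoded as a map `σ i : Γ i → Fin (k i)` with order-convex
fibers. -/
theorem basic_segmentation {n : ℕ} (Γ : Fin n → Type*) [∀ i, LinearOrder (Γ i)]
    [∀ i, WellFoundedLT (Γ i)] (L : Set (∀ i, Γ i)) (hL : IsLowerSet L) :
    ∃ (k : Fin n → ℕ) (σ : ∀ i, Γ i → Fin (k i)),
      (∀ i c, (σ i ⁻¹' {c}).OrdConnected) ∧
      ∀ x y : ∀ i, Γ i, (∀ i, σ i (x i) = σ i (y i)) → (x ∈ L ↔ y ∈ L) := by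
  obtain ⟨M, hM⟩ := hL.compl.exists_finset_upperClosure_eq
  let T : ∀ i, Finset (Γ i) := fun i => M.image (· i)
  refine ⟨fun i => #(T i) + 1, fun i => thresholdCount (T i),
    fun i => ordConnected_thresholdCount_preimage (T i), fun x y hxy => ?_⟩
  have hle : ∀ m ∈ M, m ≤ x ↔ m ≤ y := fun m hm =>
    forall_congr' fun i => le_iff_le_of_thresholdCount_eq (T i) (hxy i) (mem_image_of_mem _ hm)
  have hcompl : x ∈ Lᶜ ↔ y ∈ Lᶜ := by
    simp only [← hM, SetLike.mem_coe, mem_upperClosure]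
    exact exists_congr fun m => and_congr_right (hle m)
  exact not_iff_not.mp hcompl
end

section
/- Let (Γ₀, <), …, (Γ_{n−1}, <) be well orders, (Δ, <) a partially ordered set, f : ∏_i Γ_i → Δ an order-preserving map (with the product order on the domain), and 𝒯 a finite segmentation of Δ. Then there are finite segmentations 𝒮_i of Γ_i such that ⨂_i 𝒮_i refines the partition f*𝒯 := {f⁻¹(T) : T ∈ 𝒯}. -/
/-!
The product of finitely many well orders is a well-quasi-order, so every upper set in it is
generated by finitely many points. For each colour `c` of `τ ∘ f`, take generators of the upper
closure of the fibre over `c` and of the complement of its lower closure; these finitely many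
points `u` cut each `Γ i` into finitely many intervals according to which coordinates `u i`
lie below a given point. If `x` and `y` lie in the same box, they lie above the same generators,
so `y` lies above and below points of the fibre of `x`, hence in that (convex) fibre.
-/

open Set

theorem mem_upperClosure_iff_of_subset {α : Type*} [Preorder α] {G s : Set α}
    (hs : s ⊆ G) {x y : α} (hxy : ∀ u ∈ G, u ≤ x ↔ u ≤ y) :
    x ∈ upperClosure s ↔ y ∈ upperClosure s := by
  simp only [mem_upperClosure]
  exact exists_congr fun u => and_congr_right fun hu => hxy u (hs hu)

section WellQuasiOrder

variable {α : Type*} [PartialOrder α] [WellQuasiOrderedLE α]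

theorem UpperSet.exists_finset_upperClosure_eq (u : UpperSet α) :
    ∃ t : Finset α, upperClosure (t : Set α) = u := by
  have hfin : {a | Minimal (· ∈ u) a}.Finite :=
    WellQuasiOrderedLE.finite_of_isAntichain (setOfPred_minimal_antichain _)
  refine ⟨hfin.toFinset, SetLike.coe_injective (Set.ext fun a => ?_)⟩
  simp only [Finite.coe_toFinset, coe_upperClosure, mem_iUnion, mem_Ici, exists_prop,
    SetLike.mem_coe]
  constructor
  · rintro ⟨b, hb, hba⟩
    exact u.upper hba hb.prop
  · intro ha
    obtain ⟨b, hba, hb⟩ := (Set.isPWO_of_wellQuasiOrderedLE (u : Set α)).exists_le_minimal ha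
    exact ⟨b, hb, hba⟩

theorem exists_finset_determines_of_ordConnected_fibers {β : Type*} [Finite β] (g : α → β)
    (hg : ∀ c, (g ⁻¹' {c}).OrdConnected) :
    ∃ G : Finset α, ∀ x y, (∀ u ∈ G, u ≤ x ↔ u ≤ y) → g x = g y := by
  classical
  have := Fintype.ofFinite β
  choose lo hlo using fun c => (upperClosure (g ⁻¹' {c})).exists_finset_upperClosure_eq
  choose hi hhi using fun c => (lowerClosure (g ⁻¹' {c})).compl.exists_finset_upperClosure_eq
  let G := Finset.univ.biUnion fun c => lo c ∪ hi c
  have hlo_sub (c : β) : (lo c : Set α) ⊆ G := fun _ hu =>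
    Finset.mem_biUnion.2 ⟨c, Finset.mem_univ c, Finset.mem_union_left _ hu⟩
  have hhi_sub (c : β) : (hi c : Set α) ⊆ G := fun _ hu =>
    Finset.mem_biUnion.2 ⟨c, Finset.mem_univ c, Finset.mem_union_right _ hu⟩
  refine ⟨G, fun x y hxy => ?_⟩
  set c := g x
  have hx_fiber : x ∈ g ⁻¹' {c} := rfl
  have hy_above : y ∈ upperClosure (g ⁻¹' {c}) := by
    rw [← hlo c, ← mem_upperClosure_iff_of_subset (hlo_sub c) hxy, hlo c]
    exact subset_upperClosure hx_fiber
  have hy_below : y ∈ lowerClosure (g ⁻¹' {c}) := by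
    by_contra hy
    have hx : x ∈ upperClosure (hi c : Set α) :=
      (mem_upperClosure_iff_of_subset (hhi_sub c) hxy).2 (by rw [hhi c]; exact hy)
    rw [hhi c] at hx
    exact hx (subset_lowerClosure hx_fiber)
  obtain ⟨a, ha, hay⟩ := hy_above
  obtain ⟨b, hb, hyb⟩ := hy_below
  exact ((hg c).out ha hb ⟨hay, hyb⟩).symm

end WellQuasiOrder

section Thresholds

open Classical in
noncomputable def thresholdClass {α ι : Type*} [Preorder α] [Fintype ι] [DecidableEq ι]
    (t : ι → α) (a : α) : Fin (Fintype.card (ι → Bool)) :=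
  Fintype.equivFin _ fun j => decide (t j ≤ a)

variable {α ι : Type*} [Preorder α] [Fintype ι] [DecidableEq ι] (t : ι → α)

theorem thresholdClass_eq_iff {a b : α} :
    thresholdClass t a = thresholdClass t b ↔ ∀ j, t j ≤ a ↔ t j ≤ b := by
  simp only [thresholdClass, EmbeddingLike.apply_eq_iff_eq, funext_iff, decide_eq_decide]

theorem ordConnected_thresholdClass_fiber (c : Fin (Fintype.card (ι → Bool))) :
    (thresholdClass t ⁻¹' {c}).OrdConnected := by
  refine ⟨fun a ha b hb z hz => ?_⟩
  have hab := (thresholdClass_eq_iff t).1 (ha.trans hb.symm)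
  have hza : thresholdClass t z = thresholdClass t a := (thresholdClass_eq_iff t).2 fun j =>
    ⟨fun h => (hab j).2 (h.trans hz.2), fun h => h.trans hz.1⟩
  exact hza.trans ha

end Thresholds

/-- Let the `Γ i` be well orders, `Δ` a poset, `f` order preserving on the product, and
`τ` a finite segmentation of `Δ` (a map to `Fin m` with order-convex fibers). Then there
are finite segmentations `σ i` of the `Γ i` whose product partition refines the
partition `{f ⁻¹' (τ ⁻¹' {c})}`. -/
theorem segmentation_pullback {n : ℕ} (Γ : Fin n → Type*) [∀ i, LinearOrder (Γ i)]
    [∀ i, WellFoundedLT (Γ i)] {Δ : Type*} [PartialOrder Δ]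
    (f : (∀ i, Γ i) → Δ) (hf : Monotone f)
    (m : ℕ) (τ : Δ → Fin m) (hτ : ∀ c, (τ ⁻¹' {c}).OrdConnected) :
    ∃ (k : Fin n → ℕ) (σ : ∀ i, Γ i → Fin (k i)),
      (∀ i c, (σ i ⁻¹' {c}).OrdConnected) ∧
      ∀ x y : ∀ i, Γ i, (∀ i, σ i (x i) = σ i (y i)) → τ (f x) = τ (f y) := by
  obtain ⟨G, hG⟩ := exists_finset_determines_of_ordConnected_fibers (τ ∘ f)
    fun c => (hτ c).preimage_mono hf
  classical
  refine ⟨fun _ => Fintype.card (G → Bool),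
    fun i => thresholdClass fun u : G => (u : ∀ i, Γ i) i,
    fun i => ordConnected_thresholdClass_fiber _, fun x y hxy => hG x y fun u hu => ?_⟩
  simp only [Pi.le_def]
  exact forall_congr' fun i => (thresholdClass_eq_iff _).1 (hxy i) ⟨u, hu⟩
end

section
/- (Neumann's Lemma) Let (Γ, +, <) be an ordered Abelian group and S ⊆ Γ^{>0} a well-ordered subset. Then the map Σ : ⋃_{k∈ℕ} S^k → Γ sending a finite tuple to the sum of its entries has well-ordered image and finite fibers. -/
/-!
The sums of finite lists from `S` form the additive submonoid generated by `S`, which is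
partially well ordered because `S` is and consists of positive elements (Higman's lemma).
For finiteness of the fibres, split off the head of a list: a list summing to `γ` is
`x :: t` with `x ∈ S` and `x + t.sum = γ`. There are only finitely many such pairs
`(x, t.sum)` since both coordinates range over partially well-ordered sets, and
`t.sum < γ` because `x > 0`; so well-founded induction on `γ` concludes.
-/

namespace Set

variable {α : Type*}

theorem setOf_list_sum_eq_subset_cons [AddMonoid α] (s : Set α) (a : α) :
    {l : List α | (∀ x ∈ l, x ∈ s) ∧ l.sum = a} ⊆
      {[]} ∪ ⋃ p ∈ antidiagonal s (List.sum '' {l | ∀ x ∈ l, x ∈ s}) a,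
        List.cons p.1 '' {l | (∀ x ∈ l, x ∈ s) ∧ l.sum = p.2} := by
  rintro (_ | ⟨x, t⟩) ⟨hl, rfl⟩
  · exact Or.inl rfl
  · have ht : ∀ y ∈ t, y ∈ s := fun y hy => hl y (List.mem_cons_of_mem x hy)
    refine Or.inr (mem_biUnion (x := (x, t.sum)) ⟨hl x List.mem_cons_self, ⟨t, ht, rfl⟩, ?_⟩
      ⟨t, ⟨ht, rfl⟩, rfl⟩)
    exact List.sum_cons.symm

variable [AddCommMonoid α] [PartialOrder α] [IsOrderedCancelAddMonoid α] {s : Set α}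

theorem IsPWO.image_list_sum (hs : s.IsPWO) (hnonneg : ∀ x ∈ s, 0 ≤ x) :
    (List.sum '' {l : List α | ∀ x ∈ l, x ∈ s}).IsPWO := by
  rw [← AddSubmonoid.closure_eq_image_sum]
  exact hs.addSubmonoid_closure hnonneg

theorem IsPWO.finite_setOf_list_sum_eq (hs : s.IsPWO) (hpos : ∀ x ∈ s, 0 < x) (a : α) :
    {l : List α | (∀ x ∈ l, x ∈ s) ∧ l.sum = a}.Finite := by
  set T := List.sum '' {l : List α | ∀ x ∈ l, x ∈ s}
  have hT : T.IsPWO := hs.image_list_sum fun x hx => (hpos x hx).le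
  by_cases ha : a ∈ T
  swap
  · exact finite_empty.subset fun l ⟨hl, hsum⟩ => ha ⟨l, hl, hsum⟩
  apply hT.isWF.induction ha
  intro a _ ih
  refine ((finite_singleton []).union ((AddAntidiagonal.finite_of_isPWO hs hT a).biUnion
    fun p hp => (ih p.2 hp.2.1 ?_).image _)).subset (setOf_list_sum_eq_subset_cons s a)
  obtain ⟨hx, -, hsum⟩ := hp
  exact hsum ▸ lt_add_of_pos_left p.2 (hpos _ hx)

end Set

/-- Neumann's Lemma: if `S ⊆ Γ^{>0}` is a well-ordered subset of an ordered Abelian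
group, then the set of sums of finite tuples (lists) of elements of `S` is well ordered,
and for each `γ` there are only finitely many tuples with entries in `S` summing to `γ`. -/
theorem neumann_lemma {Γ : Type*} [AddCommGroup Γ] [LinearOrder Γ] [IsOrderedAddMonoid Γ] (S : Set Γ)
    (hS : S.IsWF) (hpos : S ⊆ Set.Ioi 0) :
    {g : Γ | ∃ l : List Γ, (∀ x ∈ l, x ∈ S) ∧ l.sum = g}.IsWF ∧
      ∀ γ : Γ, {l : List Γ | (∀ x ∈ l, x ∈ S) ∧ l.sum = γ}.Finite :=
  ⟨(hS.isPWO.image_list_sum fun _ hx => (hpos hx).le).isWF,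
    hS.isPWO.finite_setOf_list_sum_eq fun _ hx => hpos hx⟩
end

section
/- Let (Γ, +, <) be an ordered Abelian group and S ⊆ Γ^{>0} a well-ordered subset. Then there is no increasing function k : ℕ → ℕ and no sequence of tuples γ̄(n) ∈ S^{k(n)} such that the sequence of sums (Σ γ̄(n))_{n∈ℕ} is weakly decreasing and the tuples are pairwise distinct with strictly increasing lengths. -/
/-!
The sums lie in the additive monoid generated by `S`, which is partially well-ordered since `S`
is and consists of positive elements. So the weakly decreasing sequence of sums is eventually
constant, equal to some `c`, and from then on we have tuples with sum `c` of infinitely many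
lengths. But splitting a tuple with sum `c` as `c = s + c'`, with `s` its first entry and `c' < c`
the sum of the rest, uses one of only finitely many such splittings, so well-founded induction on
`c` shows that only finitely many lengths occur for each `c`.
-/

open Set

theorem Antitone.exists_forall_ge_eq_of_isWF_range {α : Type*} [PartialOrder α] {f : ℕ → α}
    (hf : Antitone f) (hwf : (range f).IsWF) : ∃ n₀, ∀ n ≥ n₀, f n = f n₀ := by
  obtain ⟨n₀, hn₀⟩ : hwf.min (range_nonempty f) ∈ range f := hwf.min_mem _
  refine ⟨n₀, fun n hn => eq_of_le_of_not_lt (hf hn) ?_⟩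
  rw [hn₀]
  exact hwf.not_lt_min _ (mem_range_self n)

section TupleLengths

variable {M : Type*} [AddCommMonoid M]

def tupleLengths (S : Set M) (c : M) : Set ℕ :=
  {m | ∃ g : Fin m → M, (∀ i, g i ∈ S) ∧ ∑ i, g i = c}

theorem tupleLengths_subset_insert_zero_biUnion (S : Set M) (c : M) :
    tupleLengths S c ⊆ insert 0 (⋃ p ∈ S.antidiagonal (AddSubmonoid.closure S) c,
      Nat.succ '' tupleLengths S p.2) := by
  rintro (_ | m) ⟨g, hgS, rfl⟩
  · exact mem_insert _ _
  · have htail : ∑ i : Fin m, g i.succ ∈ AddSubmonoid.closure S :=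
      AddSubmonoid.sum_mem _ fun i _ => AddSubmonoid.subset_closure (hgS i.succ)
    refine mem_insert_of_mem _ (mem_biUnion (x := (g 0, ∑ i : Fin m, g i.succ)) ?_ ?_)
    · exact ⟨hgS 0, htail, (Fin.sum_univ_succ g).symm⟩
    · exact ⟨m, ⟨fun i => g i.succ, fun i => hgS i.succ, rfl⟩, rfl⟩

theorem finite_tupleLengths [PartialOrder M] [IsOrderedCancelAddMonoid M] {S : Set M}
    (hS : S.IsPWO) (hpos : S ⊆ Ioi 0) {c : M} (hc : c ∈ AddSubmonoid.closure S) :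
    (tupleLengths S c).Finite := by
  have hclosure : IsPWO (AddSubmonoid.closure S : Set M) :=
    hS.addSubmonoid_closure fun x hx => (hpos hx).le
  refine hclosure.isWF.induction (P := fun c => (tupleLengths S c).Finite) hc fun c _ ih => ?_
  refine ((AddAntidiagonal.finite_of_isPWO hS hclosure c).biUnion fun p hp => ?_).insert 0
    |>.subset (tupleLengths_subset_insert_zero_biUnion S c)
  obtain ⟨hp₁, hp₂, rfl⟩ := hp
  exact (ih p.2 hp₂ (lt_add_of_pos_left _ (hpos hp₁))).image _

end TupleLengths

/-- Key step of Neumann's Lemma: for a well-ordered `S ⊆ Γ^{>0}` there is no sequence of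
tuples from `S` with strictly increasing lengths whose sums are weakly decreasing. -/
theorem no_decreasing_sums_of_increasing_lengths {Γ : Type*}
    [AddCommGroup Γ] [LinearOrder Γ] [IsOrderedAddMonoid Γ] (S : Set Γ) (hS : S.IsWF) (hpos : S ⊆ Set.Ioi 0) :
    ¬ ∃ (k : ℕ → ℕ) (γ : ∀ n, Fin (k n) → Γ),
        StrictMono k ∧ (∀ n i, γ n i ∈ S) ∧
        Antitone (fun n => ∑ i, γ n i) := by
  rintro ⟨k, γ, hk, hγS, hanti⟩
  have hsum_mem : ∀ n, ∑ i, γ n i ∈ AddSubmonoid.closure S := fun n =>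
    AddSubmonoid.sum_mem _ fun i _ => AddSubmonoid.subset_closure (hγS n i)
  have hwf : (range fun n => ∑ i, γ n i).IsWF :=
    (hS.isPWO.addSubmonoid_closure fun x hx => (hpos hx).le).isWF.mono
      (range_subset_iff.2 hsum_mem)
  obtain ⟨n₀, hconst⟩ := hanti.exists_forall_ge_eq_of_isWF_range hwf
  refine (finite_tupleLengths hS.isPWO hpos (hsum_mem n₀)).not_infinite ?_
  exact infinite_of_injective_forall_mem (hk.injective.comp (add_right_injective n₀))
    fun n => ⟨γ (n₀ + n), hγS _, hconst _ (Nat.le_add_right _ _)⟩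
end

section
/- Let (𝔐, ·, <) be a linearly ordered group and S₀, S₁ reverse well-ordered subsets of 𝔐 (i.e., well-ordered for the opposite order). Then for each final segment U of 𝔐 there exist n ∈ ℕ, final segments U₀, …, U_{n−1} of S₀, and segments T₀, …, T_{n−1} of S₁ such that (S₀ · S₁) ∩ U decomposes as {(s₀, s₁) ∈ S₀ × S₁ : s₀s₁ ∈ U} = ⨆_{i<n} U_i × T_i (a disjoint union). -/
/-!
For `t ∈ S₁` the fibre `F t = {s ∈ S₀ | s * t ∈ U}` is a final segment of `S₀`, and `F` is
monotone. So the fibres admit no strictly increasing sequence (it would come from an increasing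
sequence in `S₁`) and no strictly decreasing one (points of the successive differences would
increase in `S₀`); hence only finitely many fibres occur. Each fibre `A` is paired with its level
set `{t ∈ S₁ | F t = A}`, which is a segment of `S₁` because `F` is monotone.
-/

open Set

section Segments

variable {α : Type*} [Preorder α]

def IsFinalSegment (S A : Set α) : Prop :=
  A ⊆ S ∧ ∀ x ∈ A, ∀ y ∈ S, x ≤ y → y ∈ A

def IsSegment (S T : Set α) : Prop :=
  T ⊆ S ∧ ∀ x ∈ T, ∀ y ∈ T, ∀ z ∈ S, x ≤ z → z ≤ y → z ∈ T

theorem isSegment_setOf_eq_of_monotone {β : Type*} [PartialOrder β] {f : α → β}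
    (hf : Monotone f) (S : Set α) (b : β) : IsSegment S {t ∈ S | f t = b} :=
  ⟨fun _ ht => ht.1, fun _ hx _ hy _ hz hxz hzy =>
    ⟨hz, le_antisymm (hy.2 ▸ hf hzy) (hx.2 ▸ hf hxz)⟩⟩

theorem partiallyWellOrderedOn_ge_of_exists_max {S : Set α}
    (hS : ∀ T ⊆ S, T.Nonempty → ∃ m ∈ T, ∀ x ∈ T, x ≤ m) :
    S.PartiallyWellOrderedOn (· ≥ ·) := by
  rw [partiallyWellOrderedOn_iff_exists_lt]
  intro f hf
  obtain ⟨_, ⟨k, rfl⟩, hk⟩ := hS (range f) (range_subset_iff.2 hf) (range_nonempty f)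
  exact ⟨k, k + 1, k.lt_succ_self, hk _ (mem_range_self _)⟩

end Segments

theorem Set.Finite.of_partiallyWellOrderedOn_ge_of_isWF {β : Type*} [PartialOrder β]
    {s : Set β} (hge : s.PartiallyWellOrderedOn (· ≥ ·)) (hwf : s.IsWF) : s.Finite := by
  by_contra hinf
  let f : ℕ ↪ s := Infinite.natEmbedding s hinf
  obtain ⟨g, hg⟩ := hge.exists_monotone_subseq fun n => (f n).2
  have hanti : StrictAnti fun n => (f (g n) : β) :=
    Antitone.strictAnti_of_injective (fun _ _ => hg _ _)
      (Subtype.val_injective.comp (f.injective.comp g.injective))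
  exact isWF_iff_no_descending_seq.1 hwf _ hanti fun n => (f (g n)).2

theorem isWF_of_forall_isFinalSegment {α : Type*} [LinearOrder α] {S : Set α}
    (hS : S.PartiallyWellOrderedOn (· ≥ ·)) {𝓐 : Set (Set α)}
    (h𝓐 : ∀ A ∈ 𝓐, IsFinalSegment S A) : 𝓐.IsWF := by
  rw [isWF_iff_no_descending_seq]
  intro A hA hmem
  -- a point of `A n \ A (n + 1)` lies below all of `A (n + 1)`, so these points increase
  choose y hy hy' using fun n => exists_of_ssubset (hA (Nat.lt_succ_self n))
  have hmono : StrictMono y := strictMono_nat_of_lt_succ fun n => lt_of_not_ge fun hle =>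
    hy' n ((h𝓐 _ (hmem (n + 1))).2 _ (hy (n + 1)) _ ((h𝓐 _ (hmem n)).1 (hy n)) hle)
  obtain ⟨m, n, hmn, hge⟩ :=
    partiallyWellOrderedOn_iff_exists_lt.1 hS y fun n => (h𝓐 _ (hmem n)).1 (hy n)
  exact (hmono hmn).not_ge hge

section Fiber

variable {M : Type*} [Mul M] [Preorder M]

def mulFiber (S U : Set M) (t : M) : Set M := {x ∈ S | x * t ∈ U}

variable {S U : Set M}

theorem isFinalSegment_mulFiber [MulRightMono M] (hU : IsUpperSet U) (t : M) :
    IsFinalSegment S (mulFiber S U t) :=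
  ⟨fun _ hx => hx.1, fun _ hx _ hy hxy => ⟨hy, hU (mul_le_mul_left hxy t) hx.2⟩⟩

theorem mulFiber_mono [MulLeftMono M] (hU : IsUpperSet U) : Monotone (mulFiber S U) :=
  fun _ _ hst _ hx => ⟨hx.1, hU (mul_le_mul_right hst _) hx.2⟩

end Fiber

theorem finite_image_mulFiber {M : Type*} [Mul M] [LinearOrder M] [MulLeftMono M] [MulRightMono M]
    {S0 S1 U : Set M} (hU : IsUpperSet U) (h0 : S0.PartiallyWellOrderedOn (· ≥ ·))
    (h1 : S1.PartiallyWellOrderedOn (· ≥ ·)) : (mulFiber S0 U '' S1).Finite :=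
  .of_partiallyWellOrderedOn_ge_of_isWF
    (h1.image_of_monotone_on fun _ _ _ _ h => mulFiber_mono hU h)
    (isWF_of_forall_isFinalSegment h0 <| forall_mem_image.2 fun t _ => isFinalSegment_mulFiber hU t)

theorem setOf_mem_eq_iUnion_prod {α β : Type*} {F : β → Set α} {S : Set β} {n : ℕ}
    {e : Fin n → Set α} (he : range e = F '' S) :
    {p : α × β | p.2 ∈ S ∧ p.1 ∈ F p.2} = ⋃ i, e i ×ˢ {t ∈ S | F t = e i} := by
  ext ⟨x, t⟩
  simp only [mem_ofPred_eq, mem_iUnion, mem_prod]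
  constructor
  · rintro ⟨ht, hx⟩
    obtain ⟨i, hi⟩ : F t ∈ range e := he ▸ mem_image_of_mem F ht
    exact ⟨i, hi ▸ hx, ht, hi.symm⟩
  · rintro ⟨i, hx, ht, hi⟩
    exact ⟨ht, hi ▸ hx⟩

/-- Let `(𝔐, ·, <)` be a linearly ordered group and `S₀, S₁` reverse well-ordered
subsets (every nonempty subset has a maximum). For each final segment `U` of `𝔐` there
are finitely many final segments `Uᵢ` of `S₀` and segments `Tᵢ` of `S₁` such that
`{(s₀,s₁) ∈ S₀ × S₁ : s₀s₁ ∈ U}` is the disjoint union of the rectangles `Uᵢ × Tᵢ`. -/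
theorem product_segmentation {M : Type*} [CommGroup M] [LinearOrder M] [IsOrderedMonoid M] (S0 S1 : Set M)
    (h0 : ∀ T ⊆ S0, T.Nonempty → ∃ m ∈ T, ∀ x ∈ T, x ≤ m)
    (h1 : ∀ T ⊆ S1, T.Nonempty → ∃ m ∈ T, ∀ x ∈ T, x ≤ m)
    (U : Set M) (hU : IsUpperSet U) :
    ∃ (n : ℕ) (Us Ts : Fin n → Set M),
      (∀ i, Us i ⊆ S0 ∧ ∀ x ∈ Us i, ∀ y ∈ S0, x ≤ y → y ∈ Us i) ∧
      (∀ i, Ts i ⊆ S1 ∧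
        ∀ x ∈ Ts i, ∀ y ∈ Ts i, ∀ z ∈ S1, x ≤ z → z ≤ y → z ∈ Ts i) ∧
      (∀ i j, i ≠ j → Disjoint (Us i ×ˢ Ts i) (Us j ×ˢ Ts j)) ∧
      {p : M × M | p.1 ∈ S0 ∧ p.2 ∈ S1 ∧ p.1 * p.2 ∈ U} = ⋃ i, Us i ×ˢ Ts i := by
  obtain ⟨n, e, he⟩ := (finite_image_mulFiber hU (partiallyWellOrderedOn_ge_of_exists_max h0)
    (partiallyWellOrderedOn_ge_of_exists_max h1)).fin_embedding
  refine ⟨n, e, fun i => {t ∈ S1 | mulFiber S0 U t = e i}, fun i => ?_,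
    fun i => isSegment_setOf_eq_of_monotone (mulFiber_mono hU) S1 (e i), fun i j hij => ?_, ?_⟩
  · obtain ⟨t, -, ht⟩ : e i ∈ mulFiber S0 U '' S1 := he ▸ mem_range_self i
    exact ht ▸ isFinalSegment_mulFiber hU t
  · refine disjoint_prod.2 (Or.inr (disjoint_left.2 fun t hti htj => hij (e.injective ?_)))
    exact hti.2.symm.trans htj.2
  · rw [← setOf_mem_eq_iUnion_prod he]
    ext p
    simp only [mulFiber, mem_ofPred_eq]
    tauto
end

section
/- Let 𝔐 = 𝔑₀ × ⋯ × 𝔑_{n−1} be a product of totally ordered Abelian groups with the product partial order and 𝕂 a field. If X ⊆ 𝕂⟪𝔐⟫ is closed under truncations, then the 𝕂-subalgebra of 𝕂⟪𝔐⟫ generated by X is closed under truncations. -/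
/-!
Call `f` good for a subalgebra `A` if every truncation of `f` at finitely many cones,
`f|(⋂ c ∈ cs, Iio c)`, lies in `A`. Good series form an additive group containing the constants
and (by iterating truncations) the generators, so everything hinges on products. For a lower set
`S`, whether `a + b ∈ S` (with `a ∈ supp f`, `b ∈ supp g`) depends only on the cut
`{a ∈ supp f | a + b ∈ S}` of `b`, and because the supports are partially well ordered there
are only finitely many cuts. Grouping `supp g` by cut writes `(f g)|S` as a finite sum of
products of a truncation of `f` at a translate of `S` with the restriction of `g` to one class.
A class is cut out by finitely many translates of `S` and their complements, and restricting a
good series to any set of the Boolean algebra generated by cones keeps it good, as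
`f|Tᶜ = f - f|T`.
-/

/-- The `S`-fragment `f|S` of a Hahn series. -/
noncomputable def HahnSeries.restrictSet {Γ K : Type*} [PartialOrder Γ] [Zero K]
    (f : HahnSeries Γ K) (S : Set Γ) : HahnSeries Γ K :=
  ⟨S.indicator f.coeff, f.isPWO_support'.mono (by
    rw [Set.support_indicator]; exact Set.inter_subset_right)⟩

open Set

theorem Set.IsPWO.finite_image_cuts {Γ : Type*} [AddCommMonoid Γ] [PartialOrder Γ]
    [IsOrderedAddMonoid Γ] {F G S : Set Γ} (hF : F.IsPWO) (hG : G.IsPWO) (hS : IsLowerSet S) :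
    ((fun b => {a ∈ F | a + b ∈ S}) '' G).Finite := by
  set C : Γ → Set Γ := fun b => {a ∈ F | a + b ∈ S}
  by_contra hinf
  have hC_anti : ∀ ⦃b b'⦄, b ≤ b' → C b' ⊆ C b := fun b b' h a ha =>
    ⟨ha.1, hS (add_le_add_right h a) ha.2⟩
  let e := Set.Infinite.natEmbedding _ hinf
  choose b hbG hbC using fun k => (e k).2
  have hCb_inj : Function.Injective (C ∘ b) := fun k l h =>
    e.injective (Subtype.ext ((hbC k).symm.trans (h.trans (hbC l))))
  obtain ⟨φ, hφ⟩ := hG.exists_monotone_subseq hbG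
  -- along the monotone subsequence the cuts strictly shrink
  have hstep : ∀ k, ∃ a ∈ C (b (φ k)), a ∉ C (b (φ (k + 1))) := fun k =>
    exists_of_ssubset <| (hC_anti (hφ k.le_succ)).ssubset_of_ne fun h =>
      absurd (φ.injective (hCb_inj h)) (by omega)
  choose a ha ha' using hstep
  obtain ⟨m, n, hmn, hle⟩ := hF.exists_lt fun k => (ha k).1
  exact ha' m ⟨(ha m).1, hS (add_le_add hle (hφ (Nat.succ_le_of_lt hmn))) (ha n).2⟩

theorem Set.Finite.exists_finset_separating {α : Type*} {V : Set (Set α)} (hV : V.Finite) :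
    ∃ W : Finset α, ↑W ⊆ ⋃₀ V ∧
      ∀ v ∈ V, ∀ w ∈ V, (∀ a ∈ W, a ∈ v ↔ a ∈ w) → v = w := by
  classical
  have hwit : ∀ v w : Set α, ∃ s : Finset α, ↑s ⊆ v ∪ w ∧
      (v ≠ w → ∃ a ∈ s, ¬(a ∈ v ↔ a ∈ w)) := by
    intro v w
    by_cases hvw : v = w
    · exact ⟨∅, by simp, fun h => absurd hvw h⟩
    · obtain ⟨a, ha⟩ := not_forall.1 (mt Set.ext hvw)
      refine ⟨{a}, ?_, fun _ => ⟨a, Finset.mem_singleton_self a, ha⟩⟩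
      simp only [Finset.coe_singleton, singleton_subset_iff, mem_union]
      tauto
  choose wit hwit_sub hwit_sep using hwit
  refine ⟨(hV.toFinset ×ˢ hV.toFinset).biUnion fun p => wit p.1 p.2, ?_, ?_⟩
  · intro a ha
    simp only [Finset.coe_biUnion, Finset.coe_product, Finite.coe_toFinset, mem_iUnion] at ha
    obtain ⟨⟨v, w⟩, ⟨hv, hw⟩, ha⟩ := ha
    rcases hwit_sub v w ha with ha | ha
    exacts [⟨v, hv, ha⟩, ⟨w, hw, ha⟩]
  · intro v hv w hw hsep
    by_contra hvw
    obtain ⟨a, ha, hna⟩ := hwit_sep v w hvw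
    exact hna (hsep a (Finset.mem_biUnion.2 ⟨(v, w), by simpa using ⟨hv, hw⟩, ha⟩))

theorem Set.preimage_const_add_biInter_Iio {Γ : Type*} [AddCommGroup Γ] [PartialOrder Γ]
    [IsOrderedAddMonoid Γ] [DecidableEq Γ] (a : Γ) (cs : Finset Γ) :
    (a + ·) ⁻¹' (⋂ c ∈ cs, Iio c) = ⋂ c ∈ cs.image (· - a), Iio c := by
  simp [preimage_iInter₂]

namespace HahnSeries

section Restrict

variable {Γ R : Type*} [PartialOrder Γ]

@[simp]
theorem coeff_restrictSet [Zero R] (f : HahnSeries Γ R) (S : Set Γ) :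
    (f.restrictSet S).coeff = S.indicator f.coeff :=
  rfl

theorem support_restrictSet [Zero R] (f : HahnSeries Γ R) (S : Set Γ) :
    (f.restrictSet S).support = S ∩ f.support :=
  support_indicator

theorem restrictSet_congr [Zero R] (f : HahnSeries Γ R) {S T : Set Γ}
    (h : ∀ a ∈ f.support, a ∈ S ↔ a ∈ T) : f.restrictSet S = f.restrictSet T := by
  ext1
  simp only [coeff_restrictSet]
  rw [← indicator_inter_support, ← indicator_inter_support (s := T)]
  congr 1
  ext a
  exact and_congr_left (h a)

theorem restrictSet_restrictSet [Zero R] (f : HahnSeries Γ R) (S T : Set Γ) :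
    (f.restrictSet S).restrictSet T = f.restrictSet (T ∩ S) := by
  ext; simp [indicator_indicator]

@[simp]
theorem restrictSet_univ [Zero R] (f : HahnSeries Γ R) : f.restrictSet univ = f := by
  ext; simp

@[simp]
theorem restrictSet_empty [Zero R] (f : HahnSeries Γ R) : f.restrictSet ∅ = 0 := by
  ext; simp

@[simp]
theorem zero_restrictSet [Zero R] (S : Set Γ) : (0 : HahnSeries Γ R).restrictSet S = 0 := by
  ext; simp

theorem single_restrictSet [Zero R] (a : Γ) (r : R) (S : Set Γ) [Decidable (a ∈ S)] :
    (single a r).restrictSet S = if a ∈ S then single a r else 0 := by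
  have hsupp : ∀ b ∈ (single a r).support, b = a := fun _ => eq_of_mem_support_single
  split_ifs with ha
  · exact (restrictSet_congr _ fun b hb => by simp [hsupp b hb, ha]).trans (restrictSet_univ _)
  · exact (restrictSet_congr _ fun b hb => by simp [hsupp b hb, ha]).trans (restrictSet_empty _)

theorem add_restrictSet [AddMonoid R] (f g : HahnSeries Γ R) (S : Set Γ) :
    (f + g).restrictSet S = f.restrictSet S + g.restrictSet S := by
  ext a; by_cases ha : a ∈ S <;> simp [ha]

theorem neg_restrictSet [AddGroup R] (f : HahnSeries Γ R) (S : Set Γ) :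
    (-f).restrictSet S = -f.restrictSet S := by
  ext a; by_cases ha : a ∈ S <;> simp [ha]

theorem restrictSet_compl [AddGroup R] (f : HahnSeries Γ R) (S : Set Γ) :
    f.restrictSet Sᶜ = f - f.restrictSet S := by
  ext; simp [indicator_compl]

theorem restrictSet_union [AddGroup R] (f : HahnSeries Γ R) (S T : Set Γ) :
    f.restrictSet (S ∪ T) = f.restrictSet S + (f - f.restrictSet S).restrictSet T := by
  ext a
  by_cases hS : a ∈ S <;> by_cases hT : a ∈ T <;> simp [hS, hT]

theorem restrictSet_biInter_Iio_mem [Zero R] {X : Set (HahnSeries Γ R)}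
    (htr : ∀ x ∈ X, ∀ c, x.restrictSet (Iio c) ∈ X) {x : HahnSeries Γ R} (hx : x ∈ X)
    (cs : Finset Γ) : x.restrictSet (⋂ c ∈ cs, Iio c) ∈ X := by
  classical
  induction cs using Finset.induction_on with
  | empty => simpa using hx
  | insert c cs _ ih =>
    rw [Finset.set_biInter_insert, ← restrictSet_restrictSet]
    exact htr _ ih c

theorem isSetAlgebra_setOf_restrictSet_mem [AddGroup R] (M : AddSubgroup (HahnSeries Γ R)) :
    MeasureTheory.IsSetAlgebra {T | ∀ h ∈ M, h.restrictSet T ∈ M} where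
  empty_mem h _ := by simp
  compl_mem T hT h hh := by rw [restrictSet_compl]; exact M.sub_mem hh (hT h hh)
  union_mem T U hT hU h hh := by
    rw [restrictSet_union]; exact M.add_mem (hT h hh) (hU _ (M.sub_mem hh (hT h hh)))

end Restrict

section Mul

variable {Γ R : Type*} [AddCommMonoid Γ] [PartialOrder Γ] [IsOrderedCancelAddMonoid Γ]
  [NonUnitalNonAssocSemiring R]

theorem coeff_mul_of_support_subset {f g : HahnSeries Γ R} {s t : Set Γ} (hs : s.IsPWO)
    (ht : t.IsPWO) (hfs : f.support ⊆ s) (hgt : g.support ⊆ t) (p : Γ) :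
    (f * g).coeff p = ∑ ij ∈ Finset.antidiagonal hs ht p, f.coeff ij.1 * g.coeff ij.2 := by
  rw [coeff_mul_left' hs hfs]
  refine Finset.sum_subset (Finset.antidiagonal_mono_right hgt) fun ij hij hij' => ?_
  have hj : ij.2 ∉ g.support := fun hj =>
    hij' (Finset.mem_antidiagonal.2 ⟨(Finset.mem_antidiagonal.1 hij).1, hj,
      (Finset.mem_antidiagonal.1 hij).2.2⟩)
  rw [mem_support, not_not] at hj
  rw [hj, mul_zero]

theorem restrictSet_mul_eq_sum {ι : Type*} (f g : HahnSeries Γ R) (S : Set Γ) (τ : Γ → ι)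
    (s : Finset ι) (hτ : ∀ b ∈ g.support, τ b ∈ s) (A : ι → Set Γ)
    (hA : ∀ a ∈ f.support, ∀ b ∈ g.support, a + b ∈ S ↔ a ∈ A (τ b)) :
    (f * g).restrictSet S = ∑ i ∈ s, f.restrictSet (A i) * g.restrictSet (τ ⁻¹' {i}) := by
  classical
  ext p
  have hterm : ∀ i ∈ s, (f.restrictSet (A i) * g.restrictSet (τ ⁻¹' {i})).coeff p =
      ∑ ij ∈ Finset.antidiagonal f.isPWO_support g.isPWO_support p,
        (A i).indicator f.coeff ij.1 * (τ ⁻¹' {i}).indicator g.coeff ij.2 := fun i _ =>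
    coeff_mul_of_support_subset _ _ ((support_restrictSet f _).trans_subset inter_subset_right)
      ((support_restrictSet g _).trans_subset inter_subset_right) p
  rw [coeff_sum, Finset.sum_congr rfl hterm, Finset.sum_comm, coeff_restrictSet,
    indicator_apply, coeff_mul]
  have hsummand : ∀ ij ∈ Finset.antidiagonal f.isPWO_support g.isPWO_support p,
      ∑ i ∈ s, (A i).indicator f.coeff ij.1 * (τ ⁻¹' {i}).indicator g.coeff ij.2 =
        if p ∈ S then f.coeff ij.1 * g.coeff ij.2 else 0 := by
    intro ij hij
    obtain ⟨hi, hj, rfl⟩ := Finset.mem_antidiagonal.1 hij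
    simp only [indicator_apply, mem_preimage, mem_singleton_iff, mul_ite, mul_zero, ite_mul,
      zero_mul, Finset.sum_ite_eq, if_pos (hτ _ hj), hA _ hi _ hj]
  rw [Finset.sum_congr rfl hsummand]
  split_ifs <;> simp

end Mul

section TruncCore

variable {Γ R : Type*} [AddCommGroup Γ] [PartialOrder Γ] [IsOrderedAddMonoid Γ] [CommRing R]
  {A : Subalgebra R (HahnSeries Γ R)} {f g : HahnSeries Γ R}

def truncCore (A : Subalgebra R (HahnSeries Γ R)) : AddSubgroup (HahnSeries Γ R) where
  carrier := {h | ∀ cs : Finset Γ, h.restrictSet (⋂ c ∈ cs, Iio c) ∈ A}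
  add_mem' hf hg cs := by rw [add_restrictSet]; exact add_mem (hf cs) (hg cs)
  zero_mem' _ := by simp
  neg_mem' hf cs := by rw [neg_restrictSet]; exact neg_mem (hf cs)

theorem mem_of_mem_truncCore (hf : f ∈ truncCore A) : f ∈ A := by
  simpa using hf ∅

theorem restrictSet_biInter_Iio_mem_truncCore (hf : f ∈ truncCore A) (cs : Finset Γ) :
    f.restrictSet (⋂ c ∈ cs, Iio c) ∈ truncCore A := fun ds => by
  classical
  rw [restrictSet_restrictSet]
  convert hf (ds ∪ cs) using 2
  ext
  simp [or_imp, forall_and]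

theorem restrictSet_biInter_preimage_add_iff_mem_truncCore (hf : f ∈ truncCore A)
    (cs W : Finset Γ) (q : Γ → Prop) :
    f.restrictSet (⋂ a ∈ W, {b | a + b ∈ ⋂ c ∈ cs, Iio c ↔ q a}) ∈ truncCore A := by
  classical
  have hT := isSetAlgebra_setOf_restrictSet_mem (truncCore A)
  refine hT.biInter_mem W (fun a _ => ?_) f hf
  have hcone : {b | a + b ∈ ⋂ c ∈ cs, Iio c} ∈
      {T | ∀ h ∈ truncCore A, h.restrictSet T ∈ truncCore A} := by
    change (a + ·) ⁻¹' _ ∈ _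
    rw [preimage_const_add_biInter_Iio]
    exact fun h hh => restrictSet_biInter_Iio_mem_truncCore hh _
  by_cases hq : q a
  · convert hcone using 1; ext; simp [hq]
  · convert hT.compl_mem hcone using 1; ext; simp [hq]

theorem mul_mem_truncCore (hf : f ∈ truncCore A) (hg : g ∈ truncCore A) :
    f * g ∈ truncCore A := by
  classical
  intro cs
  set S := ⋂ c ∈ cs, Iio c
  set C : Γ → Set Γ := fun b => {a ∈ f.support | a + b ∈ S}
  have hfin : (C '' g.support).Finite := f.isPWO_support.finite_image_cuts g.isPWO_support
    (isLowerSet_iInter₂ fun c _ => isLowerSet_Iio c)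
  obtain ⟨W, hWF, hW⟩ := hfin.exists_finset_separating
  set rep := Function.invFunOn C g.support
  have hrep : ∀ b ∈ g.support, C (rep (C b)) = C b := fun b hb =>
    Function.invFunOn_eq ⟨b, hb, rfl⟩
  rw [restrictSet_mul_eq_sum f g S C hfin.toFinset
    (fun b hb => hfin.mem_toFinset.2 (mem_image_of_mem C hb)) (fun v => (rep v + ·) ⁻¹' S) ?_]
  · refine sum_mem fun v hv => mul_mem ?_ ?_
    · rw [preimage_const_add_biInter_Iio]
      exact hf _
    · obtain ⟨b₀, hb₀, rfl⟩ := hfin.mem_toFinset.1 hv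
      rw [g.restrictSet_congr (T := ⋂ a ∈ W, {b | a + b ∈ S ↔ a + b₀ ∈ S}) ?_]
      · exact mem_of_mem_truncCore (restrictSet_biInter_preimage_add_iff_mem_truncCore hg cs W _)
      intro b hb
      simp only [mem_preimage, mem_singleton_iff, mem_iInter₂, mem_ofPred_eq]
      constructor
      · intro hCb a ha
        have haF : a ∈ f.support := by
          obtain ⟨_, ⟨b', _, rfl⟩, hav⟩ := hWF ha
          exact hav.1
        exact and_congr_right_iff.1 (Set.ext_iff.1 hCb a) haF
      · exact fun hsep => hW _ (mem_image_of_mem C hb) _ (mem_image_of_mem C hb₀)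
          fun a ha => and_congr_right fun _ => hsep a ha
  · intro a ha b hb
    simpa only [mem_preimage, add_comm (rep _)] using
      (and_congr_right_iff.1 (Set.ext_iff.1 (hrep b hb) a) ha).symm

theorem algebraMap_mem_truncCore (r : R) : algebraMap R (HahnSeries Γ R) r ∈ truncCore A := by
  classical
  intro cs
  rw [algebraMap_apply, Algebra.algebraMap_self_apply, C_apply, single_restrictSet]
  split_ifs
  · rw [← C_apply, ← Algebra.algebraMap_self_apply r, ← algebraMap_apply]
    exact algebraMap_mem A r
  · exact zero_mem A

end TruncCore

section Adjoin

variable {Γ R : Type*} [AddCommGroup Γ] [PartialOrder Γ] [IsOrderedAddMonoid Γ] [CommRing R]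
  {X : Set (HahnSeries Γ R)}

theorem mem_truncCore_adjoin (htr : ∀ x ∈ X, ∀ c, x.restrictSet (Iio c) ∈ X)
    {f : HahnSeries Γ R} (hf : f ∈ Algebra.adjoin R X) :
    f ∈ truncCore (Algebra.adjoin R X) := by
  induction hf using Algebra.adjoin_induction with
  | mem x hx => exact fun cs => Algebra.subset_adjoin (restrictSet_biInter_Iio_mem htr hx cs)
  | algebraMap r => exact algebraMap_mem_truncCore r
  | add _ _ _ _ hf hg => exact add_mem hf hg
  | mul _ _ _ _ hf hg => exact mul_mem_truncCore hf hg

theorem restrictSet_Iio_mem_adjoin (htr : ∀ x ∈ X, ∀ c, x.restrictSet (Iio c) ∈ X)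
    {f : HahnSeries Γ R} (hf : f ∈ Algebra.adjoin R X) (c : Γ) :
    f.restrictSet (Iio c) ∈ Algebra.adjoin R X := by
  simpa using mem_truncCore_adjoin htr hf {c}

end Adjoin

end HahnSeries

/-- Let `𝔐 = 𝔑₀ × ⋯ × 𝔑_{n−1}` be a product of totally ordered Abelian groups with the
product partial order.  If `X ⊆ 𝕂⟪𝔐⟫` is closed under truncations `f|{𝔫 : 𝔫 > 𝔪}`,
then the `𝕂`-subalgebra of `𝕂⟪𝔐⟫` generated by `X` is closed under truncations.
(Supports are reverse well partially ordered, encoded via the order dual.) -/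
theorem algebra_adjoin_truncationClosed
    {n : ℕ} (N : Fin n → Type*) [∀ i, AddCommGroup (N i)] [∀ i, LinearOrder (N i)]
    [∀ i, IsOrderedAddMonoid (N i)]
    (K : Type*) [Field K]
    (X : Set (HahnSeries ((∀ i, N i))ᵒᵈ K))
    (htrunc : ∀ f ∈ X, ∀ m : ∀ i, N i,
      f.restrictSet (OrderDual.ofDual ⁻¹' {b | m < b}) ∈ X) :
    ∀ f ∈ Algebra.adjoin K X, ∀ m : ∀ i, N i,
      f.restrictSet (OrderDual.ofDual ⁻¹' {b | m < b}) ∈ Algebra.adjoin K X :=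
  fun _ hf m => HahnSeries.restrictSet_Iio_mem_adjoin (fun x hx c => htrunc x hx c.ofDual) hf
    (OrderDual.toDual m)
end
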